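/- Consider the closed-loop system q̇ = ξ, χ̃̇ = Aχ̃ - Γ(q)ᵀξ, ė = D(z)ᵀB̄ᵀJ(q)ξ, H(q)ξ̇ = -K_P J(q)ᵀ B̄ D(z) e - K_D ξ - C(q,ξ)ξ + Γ(q)χ̃, where A is skew-symmetric, H(q) is symmetric positive definite with Ḣ = C + Cᵀ, and K_P, K_D > 0. Then U = ½χ̃ᵀχ̃ + ½ K_P eᵀe + ½ ξᵀH(q)ξ satisfies U̇ = -K_D ξᵀξ ≤ 0 along all solutions. -/

import Mathlib

/-!
Along a solution, the derivative of each of the three energies is a power term: the observer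
energy gives `-ξ ⬝ Γ χ̃` (the skew-symmetric `A` does no work), the elastic energy gives
`K_P ξ ⬝ Jᵀ B̄ D e`, and the kinetic energy, using `Ḣ = C + Cᵀ`, gives
`ξ ⬝ (H ξ̇ + C ξ)`. Substituting the closed-loop equation for `H ξ̇`, all power terms cancel except
the damping `-K_D ξ ⬝ ξ`.
-/

open Matrix

section Calculus

variable {𝕜 : Type*} [NontriviallyNormedField 𝕜] {ι κ : Type*} [Fintype ι]

theorem hasDerivAt_dotProduct {f g : 𝕜 → ι → 𝕜} {f' g' : ι → 𝕜} {t : 𝕜}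
    (hf : ∀ i, HasDerivAt (fun s => f s i) (f' i) t)
    (hg : ∀ i, HasDerivAt (fun s => g s i) (g' i) t) :
    HasDerivAt (fun s => f s ⬝ᵥ g s) (f' ⬝ᵥ g t + f t ⬝ᵥ g') t := by
  have h : HasDerivAt (fun s => ∑ i, f s i * g s i) (∑ i, (f' i * g t i + f t i * g' i)) t :=
    HasDerivAt.fun_sum fun i _ => (hf i).mul (hg i)
  simpa only [dotProduct, Finset.sum_add_distrib] using h

theorem hasDerivAt_mulVec_apply {M : 𝕜 → Matrix κ ι 𝕜} {M' : Matrix κ ι 𝕜} {v : 𝕜 → ι → 𝕜}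
    {v' : ι → 𝕜} {t : 𝕜} (hM : ∀ k i, HasDerivAt (fun s => M s k i) (M' k i) t)
    (hv : ∀ i, HasDerivAt (fun s => v s i) (v' i) t) (k : κ) :
    HasDerivAt (fun s => (M s *ᵥ v s) k) ((M' *ᵥ v t + M t *ᵥ v') k) t :=
  hasDerivAt_dotProduct (hM k) hv

theorem hasDerivAt_dotProduct_self {v : 𝕜 → ι → 𝕜} {v' : ι → 𝕜} {t : 𝕜}
    (hv : ∀ i, HasDerivAt (fun s => v s i) (v' i) t) :
    HasDerivAt (fun s => v s ⬝ᵥ v s) (2 * (v t ⬝ᵥ v')) t := by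
  simpa only [dotProduct_comm v', two_mul] using hasDerivAt_dotProduct hv hv

theorem hasDerivAt_dotProduct_mulVec_self {M : 𝕜 → Matrix ι ι 𝕜} {M' : Matrix ι ι 𝕜}
    {v : 𝕜 → ι → 𝕜} {v' : ι → 𝕜} {t : 𝕜} (hMsymm : (M t)ᵀ = M t)
    (hM : ∀ i j, HasDerivAt (fun s => M s i j) (M' i j) t)
    (hv : ∀ i, HasDerivAt (fun s => v s i) (v' i) t) :
    HasDerivAt (fun s => v s ⬝ᵥ M s *ᵥ v s)
      (v t ⬝ᵥ M' *ᵥ v t + 2 * (v t ⬝ᵥ M t *ᵥ v')) t := by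
  have hsymm : v' ⬝ᵥ M t *ᵥ v t = v t ⬝ᵥ M t *ᵥ v' := by
    rw [← dotProduct_transpose_mulVec, hMsymm]
  convert hasDerivAt_dotProduct hv (hasDerivAt_mulVec_apply hM hv) using 1
  rw [hsymm, dotProduct_add]
  ring

end Calculus

section QuadraticForms

variable {R : Type*} [CommRing R] {ι : Type*} [Fintype ι]

theorem dotProduct_add_transpose_mulVec_self (M : Matrix ι ι R) (v : ι → R) :
    v ⬝ᵥ (M + Mᵀ) *ᵥ v = 2 * (v ⬝ᵥ M *ᵥ v) := by
  rw [add_mulVec, dotProduct_add, dotProduct_transpose_mulVec, two_mul]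

theorem dotProduct_mulVec_self_eq_zero_of_add_transpose_eq_zero [NoZeroDivisors R]
    [CharZero R] {A : Matrix ι ι R} (hA : A + Aᵀ = 0) (v : ι → R) : v ⬝ᵥ A *ᵥ v = 0 := by
  have h := dotProduct_add_transpose_mulVec_self A v
  rw [hA, zero_mulVec, dotProduct_zero, eq_comm, mul_eq_zero] at h
  exact h.resolve_left two_ne_zero

end QuadraticForms

theorem closedLoop_power_balance {n p l m k : Type*} [Fintype n] [Fintype p] [Fintype l]
    [Fintype m] [Fintype k] {A : Matrix p p ℝ} (hA : A + Aᵀ = 0) (Bbar : Matrix m k ℝ)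
    (H C : Matrix n n ℝ) (J : Matrix m n ℝ) (Γ : Matrix n p ℝ) (Dz : Matrix k l ℝ)
    (K_P K_D : ℝ) (ξ ξ' : n → ℝ) (χ : p → ℝ) (e : l → ℝ)
    (hODE : H *ᵥ ξ' = -(K_P • (Jᵀ * Bbar * Dz) *ᵥ e) - K_D • ξ - C *ᵥ ξ + Γ *ᵥ χ) :
    χ ⬝ᵥ (A *ᵥ χ - Γᵀ *ᵥ ξ) + K_P * (e ⬝ᵥ (Dzᵀ * Bbarᵀ * J) *ᵥ ξ)
      + (ξ ⬝ᵥ H *ᵥ ξ' + ξ ⬝ᵥ C *ᵥ ξ) = -(K_D * (ξ ⬝ᵥ ξ)) := by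
  have hobserver : χ ⬝ᵥ (A *ᵥ χ - Γᵀ *ᵥ ξ) = -(ξ ⬝ᵥ Γ *ᵥ χ) := by
    rw [dotProduct_sub, dotProduct_mulVec_self_eq_zero_of_add_transpose_eq_zero hA,
      dotProduct_transpose_mulVec, zero_sub]
  have helastic : e ⬝ᵥ (Dzᵀ * Bbarᵀ * J) *ᵥ ξ = ξ ⬝ᵥ (Jᵀ * Bbar * Dz) *ᵥ e := by
    rw [← dotProduct_transpose_mulVec]
    simp only [transpose_mul, transpose_transpose, Matrix.mul_assoc]
  rw [hobserver, helastic, hODE]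
  simp only [dotProduct_add, dotProduct_sub, dotProduct_neg, dotProduct_smul, smul_eq_mul]
  ring

theorem closed_loop_lyapunov_general {nq p le mN mE : ℕ}
    (A : Matrix (Fin p) (Fin p) ℝ) (hA : A + Aᵀ = 0)
    (Bbar : Matrix (Fin mN) (Fin mE) ℝ)
    (H H' C : ℝ → Matrix (Fin nq) (Fin nq) ℝ)
    (J : ℝ → Matrix (Fin mN) (Fin nq) ℝ)
    (Γ : ℝ → Matrix (Fin nq) (Fin p) ℝ)
    (Dz : ℝ → Matrix (Fin mE) (Fin le) ℝ)
    (K_P K_D : ℝ) (hKD : 0 < K_D)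
    (ξ ξ' : ℝ → Fin nq → ℝ) (χ : ℝ → Fin p → ℝ) (e : ℝ → Fin le → ℝ)
    (hHsym : ∀ t, (H t)ᵀ = H t)
    (hHderiv : ∀ t i j, HasDerivAt (fun s => H s i j) (H' t i j) t)
    (hHC : ∀ t, H' t = C t + (C t)ᵀ)
    (hχ : ∀ t i, HasDerivAt (fun s => χ s i)
      ((A.mulVec (χ t) - (Γ t)ᵀ.mulVec (ξ t)) i) t)
    (he : ∀ t k, HasDerivAt (fun s => e s k)
      (((Dz t)ᵀ * Bbarᵀ * J t).mulVec (ξ t) k) t)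
    (hξ : ∀ t i, HasDerivAt (fun s => ξ s i) (ξ' t i) t)
    (hODE : ∀ t, (H t).mulVec (ξ' t) =
      -(K_P • ((J t)ᵀ * Bbar * Dz t).mulVec (e t)) - K_D • ξ t
        - (C t).mulVec (ξ t) + (Γ t).mulVec (χ t))
    (U : ℝ → ℝ)
    (hU : ∀ t, U t = (1 / 2 : ℝ) * (χ t ⬝ᵥ χ t) + (1 / 2 : ℝ) * K_P * (e t ⬝ᵥ e t)
      + (1 / 2 : ℝ) * (ξ t ⬝ᵥ (H t).mulVec (ξ t))) :
    ∀ t, HasDerivAt U (-(K_D * (ξ t ⬝ᵥ ξ t))) t ∧ -(K_D * (ξ t ⬝ᵥ ξ t)) ≤ 0 := by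
  intro t
  have hobserver := hasDerivAt_dotProduct_self (hχ t)
  have helastic := hasDerivAt_dotProduct_self (he t)
  have hkinetic := hasDerivAt_dotProduct_mulVec_self (hHsym t) (hHderiv t) (hξ t)
  rw [hHC, dotProduct_add_transpose_mulVec_self] at hkinetic
  have hbalance := closedLoop_power_balance hA Bbar (H t) (C t) (J t) (Γ t) (Dz t) K_P K_D
    (ξ t) (ξ' t) (χ t) (e t) (hODE t)
  constructor
  · have hsum := ((hobserver.const_mul (1 / 2 : ℝ)).add
      (helastic.const_mul ((1 / 2 : ℝ) * K_P))).add (hkinetic.const_mul (1 / 2 : ℝ))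
    refine (hsum.congr_deriv ?_).congr_of_eventuallyEq (Filter.Eventually.of_forall hU)
    linear_combination hbalance
  · have hξξ : 0 ≤ ξ t ⬝ᵥ ξ t := Finset.sum_nonneg fun i _ => mul_self_nonneg (ξ t i)
    exact neg_nonpos.mpr (mul_nonneg hKD.le hξξ)

theorem closed_loop_lyapunov {nq p le mN mE : ℕ}
    (A : Matrix (Fin p) (Fin p) ℝ) (hA : A + Aᵀ = 0)
    (Bbar : Matrix (Fin mN) (Fin mE) ℝ)
    (H H' C : ℝ → Matrix (Fin nq) (Fin nq) ℝ)
    (J : ℝ → Matrix (Fin mN) (Fin nq) ℝ)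
    (Γ : ℝ → Matrix (Fin nq) (Fin p) ℝ)
    (Dz : ℝ → Matrix (Fin mE) (Fin le) ℝ)
    (K_P K_D : ℝ) (hKP : 0 < K_P) (hKD : 0 < K_D)
    (q ξ ξ' : ℝ → Fin nq → ℝ) (χ : ℝ → Fin p → ℝ) (e : ℝ → Fin le → ℝ)
    (hHsym : ∀ t, (H t)ᵀ = H t) (hHpd : ∀ t, (H t).PosDef)
    (hHderiv : ∀ t i j, HasDerivAt (fun s => H s i j) (H' t i j) t)
    (hHC : ∀ t, H' t = C t + (C t)ᵀ)
    (hq : ∀ t i, HasDerivAt (fun s => q s i) (ξ t i) t)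
    (hχ : ∀ t i, HasDerivAt (fun s => χ s i)
      ((A.mulVec (χ t) - (Γ t)ᵀ.mulVec (ξ t)) i) t)
    (he : ∀ t k, HasDerivAt (fun s => e s k)
      (((Dz t)ᵀ * Bbarᵀ * J t).mulVec (ξ t) k) t)
    (hξ : ∀ t i, HasDerivAt (fun s => ξ s i) (ξ' t i) t)
    (hODE : ∀ t, (H t).mulVec (ξ' t) =
      -(K_P • ((J t)ᵀ * Bbar * Dz t).mulVec (e t)) - K_D • ξ t
        - (C t).mulVec (ξ t) + (Γ t).mulVec (χ t))
    (U : ℝ → ℝ)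
    (hU : ∀ t, U t = (1 / 2 : ℝ) * (χ t ⬝ᵥ χ t) + (1 / 2 : ℝ) * K_P * (e t ⬝ᵥ e t)
      + (1 / 2 : ℝ) * (ξ t ⬝ᵥ (H t).mulVec (ξ t))) :
    ∀ t, HasDerivAt U (-(K_D * (ξ t ⬝ᵥ ξ t))) t ∧ -(K_D * (ξ t ⬝ᵥ ξ t)) ≤ 0 :=
  closed_loop_lyapunov_general A hA Bbar H H' C J Γ Dz K_P K_D hKD ξ ξ' χ e hHsym hHderiv hHC hχ he
    hξ hODE U hU
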